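/- For ε ∈ {+1, −1} let G_ε(s, t) = π^{−s} Γ((s + (1−ε)/2 − it)/2) · Γ((s + (1−ε)/2 + it)/2). Then for every τ ∈ ℝ and every t ∈ ℂ with |Im t| < 1/2, [G_{−1}(1/2 − iτ, t) / G_{−1}(1/2 + iτ, t)] · [G_{+1}(1/2 + iτ, t) / G_{+1}(1/2 − iτ, t)] = (1 − i sinh(πτ)/cosh(πt)) / (1 + i sinh(πτ)/cosh(πt)) = Q_τ(t); in particular all Gamma factors and the denominator cosh(πt) + i sinh(πτ) are nonzero under these hypotheses. -/

import Mathlib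

/-!
The reflection formula `Γ(z) Γ(1 - z) = π / sin (π z)` and the product-to-sum formula give
`G₊₁(s, t) G₋₁(1 - s, t) = 2π / (cosh (π t) - cos (π s))` for all `s` and `t`.
The points `1/2 ± iτ` are exchanged by `s ↦ 1 - s` and `cos (π (1/2 ± iτ)) = ∓ i sinh (π τ)`,
so the ratio is the quotient of two such products. For `|Im t| < 1/2` every Gamma argument has
positive real part, so no factor vanishes.
-/

/-- `G_ε(s, t) = π^{−s} Γ((s + (1−ε)/2 − it)/2) Γ((s + (1−ε)/2 + it)/2)` for `ε = ±1`. -/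
noncomputable def Gfac (ε : ℤ) (s t : ℂ) : ℂ :=
  (Real.pi : ℂ) ^ (-s) *
    Complex.Gamma ((s + (1 - ε) / 2 - Complex.I * t) / 2) *
    Complex.Gamma ((s + (1 - ε) / 2 + Complex.I * t) / 2)

open Complex
open scoped Real

lemma Gfac_ne_zero_of_abs_im_lt {ε : ℤ} {s t : ℂ} (h : |t.im| < s.re + (1 - ε) / 2) :
    Gfac ε s t ≠ 0 := by
  obtain ⟨hl, hr⟩ := abs_lt.mp h
  have hre_sub : ((s + (1 - ε) / 2 - I * t) / 2).re = (s.re + (1 - ε) / 2 + t.im) / 2 := by simp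
  have hre_add : ((s + (1 - ε) / 2 + I * t) / 2).re = (s.re + (1 - ε) / 2 - t.im) / 2 := by
    simp [sub_eq_add_neg]
  refine mul_ne_zero (mul_ne_zero ?_ (Gamma_ne_zero_of_re_pos ?_)) (Gamma_ne_zero_of_re_pos ?_)
  · simp [cpow_eq_zero_iff, Real.pi_ne_zero]
  · rw [hre_sub]; linarith
  · rw [hre_add]; linarith

lemma cosh_pi_mul_ne_zero {t : ℂ} (ht : |t.im| < 1 / 2) : cosh (π * t) ≠ 0 := by
  rw [← cos_mul_I, cos_ne_zero_iff]
  intro k hk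
  have him : -t.im * 2 = 2 * k + 1 := by
    have hre := congrArg re hk
    simp only [mul_re, mul_im, ofReal_re, ofReal_im, I_re, I_im, div_ofNat_re, add_re, one_re,
      re_ofNat, intCast_re, im_ofNat, intCast_im, zero_mul, mul_zero, mul_one, sub_zero, zero_sub,
      add_zero] at hre
    apply mul_left_cancel₀ Real.pi_ne_zero
    linear_combination 2 * hre
  have hk : (1 : ℝ) ≤ |(2 * k + 1 : ℤ)| := mod_cast Int.one_le_abs (by omega)
  push_cast at hk
  rw [← him, abs_mul, abs_neg] at hk
  rw [abs_two] at hk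
  linarith

lemma two_mul_sin_mul_sin_eq_cosh_sub_cos (s t : ℂ) :
    2 * (sin (π * ((s - I * t) / 2)) * sin (π * ((s + I * t) / 2))) =
      cosh (π * t) - cos (π * s) := by
  rw [← cos_mul_I, cos_sub_cos, show (π * t * I + π * s) / 2 = π * ((s + I * t) / 2) by ring,
    show (π * t * I - π * s) / 2 = -(π * ((s - I * t) / 2)) by ring, sin_neg]
  ring

/-- No side conditions are needed: Mathlib's `Γ` vanishes at its poles and `x / 0 = 0`, so the
reflection formula holds everywhere. -/
lemma Gfac_one_mul_Gfac_neg_one_one_sub (s t : ℂ) :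
    Gfac 1 s t * Gfac (-1) (1 - s) t = 2 * π / (cosh (π * t) - cos (π * s)) := by
  have hπ : (π : ℂ) ≠ 0 := ofReal_ne_zero.mpr Real.pi_ne_zero
  have hpow : (π : ℂ) ^ (-s) * (π : ℂ) ^ (-(1 - s)) = (π : ℂ)⁻¹ := by
    rw [← cpow_add _ _ hπ, show -s + -(1 - s) = -1 by ring, cpow_neg_one]
  set a := (s - I * t) / 2
  set b := (s + I * t) / 2
  have hGfac_one : Gfac 1 s t = (π : ℂ) ^ (-s) * Gamma a * Gamma b := by
    simp only [Gfac, Int.cast_one, sub_self, zero_div, add_zero, a, b]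
  have hGfac_neg_one :
      Gfac (-1) (1 - s) t = (π : ℂ) ^ (-(1 - s)) * Gamma (1 - b) * Gamma (1 - a) := by
    unfold Gfac; congr 3 <;> push_cast <;> ring
  calc Gfac 1 s t * Gfac (-1) (1 - s) t
      = (π : ℂ) ^ (-s) * (π : ℂ) ^ (-(1 - s)) * (Gamma a * Gamma (1 - a)) *
          (Gamma b * Gamma (1 - b)) := by rw [hGfac_one, hGfac_neg_one]; ring
    _ = 2 * π / (2 * (sin (π * a) * sin (π * b))) := by
      rw [hpow, Gamma_mul_Gamma_one_sub, Gamma_mul_Gamma_one_sub]; field_simp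
    _ = 2 * π / (cosh (π * t) - cos (π * s)) := by rw [two_mul_sin_mul_sin_eq_cosh_sub_cos]

lemma cos_pi_mul_half_add_I_mul (x : ℂ) : cos (π * (1 / 2 + I * x)) = -(I * sinh (π * x)) := by
  rw [show π * (1 / 2 + I * x) = π * x * I + π / 2 by ring, cos_add_pi_div_two, sin_mul_I]
  ring

lemma cos_pi_mul_half_sub_I_mul (x : ℂ) : cos (π * (1 / 2 - I * x)) = I * sinh (π * x) := by
  simpa [mul_neg, sinh_neg, ← sub_eq_add_neg] using cos_pi_mul_half_add_I_mul (-x)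

/-- For `τ ∈ ℝ` and `|Im t| < 1/2`, the ratio of Gamma factors equals
`Q_τ(t) = (1 − i sinh(πτ)/cosh(πt))/(1 + i sinh(πτ)/cosh(πt))`; in particular all the
Gamma factors and the denominator `cosh(πt) + i sinh(πτ)` are nonzero. -/
theorem gamma_ratio_eq_Q (τ : ℝ) (t : ℂ) (ht : |t.im| < 1 / 2) :
    Gfac (-1) (1 / 2 - Complex.I * τ) t ≠ 0 ∧
    Gfac (-1) (1 / 2 + Complex.I * τ) t ≠ 0 ∧
    Gfac 1 (1 / 2 + Complex.I * τ) t ≠ 0 ∧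
    Gfac 1 (1 / 2 - Complex.I * τ) t ≠ 0 ∧
    Complex.cosh (Real.pi * t) ≠ 0 ∧
    Complex.cosh (Real.pi * t) + Complex.I * (Real.sinh (Real.pi * τ) : ℂ) ≠ 0 ∧
    (Gfac (-1) (1 / 2 - Complex.I * τ) t / Gfac (-1) (1 / 2 + Complex.I * τ) t) *
        (Gfac 1 (1 / 2 + Complex.I * τ) t / Gfac 1 (1 / 2 - Complex.I * τ) t)
      = (1 - Complex.I * (Real.sinh (Real.pi * τ) : ℂ) / Complex.cosh (Real.pi * t)) /
          (1 + Complex.I * (Real.sinh (Real.pi * τ) : ℂ) / Complex.cosh (Real.pi * t)) := by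
  obtain ⟨htl, htr⟩ := abs_lt.mp ht
  have hGneg_m : Gfac (-1) (1 / 2 - I * τ) t ≠ 0 :=
    Gfac_ne_zero_of_abs_im_lt (by norm_num; linarith)
  have hGneg_p : Gfac (-1) (1 / 2 + I * τ) t ≠ 0 :=
    Gfac_ne_zero_of_abs_im_lt (by norm_num; linarith)
  have hGone_p : Gfac 1 (1 / 2 + I * τ) t ≠ 0 := Gfac_ne_zero_of_abs_im_lt (by simpa using ht)
  have hGone_m : Gfac 1 (1 / 2 - I * τ) t ≠ 0 := Gfac_ne_zero_of_abs_im_lt (by simpa using ht)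
  have hprod_p : Gfac 1 (1 / 2 + I * τ) t * Gfac (-1) (1 / 2 - I * τ) t =
      2 * π / (cosh (π * t) + I * sinh (π * τ)) := by
    rw [show (1 / 2 - I * τ : ℂ) = 1 - (1 / 2 + I * τ) by ring,
      Gfac_one_mul_Gfac_neg_one_one_sub, cos_pi_mul_half_add_I_mul, sub_neg_eq_add]
  have hprod_m : Gfac 1 (1 / 2 - I * τ) t * Gfac (-1) (1 / 2 + I * τ) t =
      2 * π / (cosh (π * t) - I * sinh (π * τ)) := by
    rw [show (1 / 2 + I * τ : ℂ) = 1 - (1 / 2 - I * τ) by ring,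
      Gfac_one_mul_Gfac_neg_one_one_sub, cos_pi_mul_half_sub_I_mul]
  -- `x / 0 = 0`, so the nonzero products force the denominators to be nonzero.
  have hden_p : cosh (π * t) + I * sinh (π * τ) ≠ 0 :=
    (div_ne_zero_iff.mp (hprod_p ▸ mul_ne_zero hGone_p hGneg_m)).2
  have hden_m : cosh (π * t) - I * sinh (π * τ) ≠ 0 :=
    (div_ne_zero_iff.mp (hprod_m ▸ mul_ne_zero hGone_m hGneg_p)).2
  have hC : cosh (π * t) ≠ 0 := cosh_pi_mul_ne_zero ht
  simp only [ofReal_sinh, ofReal_mul]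
  refine ⟨hGneg_m, hGneg_p, hGone_p, hGone_m, hC, hden_p, ?_⟩
  rw [div_mul_div_comm, mul_comm (Gfac (-1) _ t), hprod_p, mul_comm (Gfac (-1) _ t), hprod_m]
  field_simp
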